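/- Fix β ≥ 0 and B ∈ ℝ. The function G_{β,B} is continuous on [0,1]^ℕ equipped with the product topology, and it attains its supremum: there exists s* ∈ [0,1]^ℕ with G_{β,B}(s*) = sup_{s ∈ [0,1]^ℕ} G_{β,B}(s). -/

import Mathlib

open Filter Topology

/-- `f_β(u) = (e^{-2β}(1-2u) + √(1 + (e^{-4β}-1)(1-2u)²)) / (2(1-u))`. -/
noncomputable def fBeta (β u : ℝ) : ℝ :=
  (Real.exp (-2*β) * (1-2*u) + Real.sqrt (1 + (Real.exp (-4*β) - 1) * (1-2*u)^2)) / (2*(1-u))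

/-- `F_β(t) = ∫_0^{min(t,1-t)} log f_β(u) du`. -/
noncomputable def FBeta (β t : ℝ) : ℝ :=
  ∫ u in (0:ℝ)..(min t (1-t)), Real.log (fBeta β u)

/-- The entropy function `I(t) = -t log t - (1-t) log(1-t)` (with `I(0) = I(1) = 0`,
using the convention `log 0 = 0`). -/
noncomputable def entI (t : ℝ) : ℝ := -t * Real.log t - (1-t) * Real.log (1-t)

/-- The mean `E[D] = ∑_{k≥1} k p_k` of a degree distribution `p`. -/
noncomputable def meanD (p : ℕ → ℝ) : ℝ := ∑' (k : ℕ), (k : ℝ) * p k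

/-- The functional
`G_{β,B}(s) = ∑_k p_k I(s_k) + B(2 ∑_k s_k p_k − 1) + E[D]·F_β((∑_k k p_k s_k)/E[D])`. -/
noncomputable def Gfun (p : ℕ → ℝ) (β B : ℝ) (s : ℕ → ℝ) : ℝ :=
  (∑' k, p k * entI (s k)) + B * (2 * (∑' k, s k * p k) - 1)
    + meanD p * FBeta β ((∑' (k : ℕ), (k : ℝ) * p k * s k) / meanD p)

/-- The cube `[0,1]^ℕ`. -/
def unitCube : Set (ℕ → ℝ) := {s | ∀ k, s k ∈ Set.Icc (0:ℝ) 1}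


/-!
Every series in `G_{β,B}` is dominated termwise by a summable sequence uniformly on the cube
(the entropy is bounded by `log 2`), so by the Weierstrass M-test each one is continuous in the
product topology. `F_β` is continuous on `[0,1]` as a primitive of `log ∘ f_β`, which is
continuous on `[0,1/2]` because `f_β > 0` there, and the argument `∑ k p_k s_k / E[D]` stays in
`[0,1]`. The cube is compact by Tychonoff, so `G_{β,B}` attains its supremum.
-/

open Set

lemma isCompact_unitCube : IsCompact unitCube := by
  convert isCompact_univ_pi fun _ : ℕ => isCompact_Icc (a := (0 : ℝ)) (b := 1)
  ext s
  simp [unitCube, Pi.le_def, forall_and]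

lemma unitCube_nonempty : unitCube.Nonempty :=
  ⟨fun _ => 0, fun _ => ⟨le_rfl, zero_le_one⟩⟩

lemma entI_eq_binEntropy : entI = Real.binEntropy := by
  ext t
  simp only [entI, Real.binEntropy, Real.log_inv]
  ring

lemma abs_entI_le_log_two {t : ℝ} (ht : t ∈ Icc (0 : ℝ) 1) : |entI t| ≤ Real.log 2 := by
  rw [entI_eq_binEntropy, abs_of_nonneg (Real.binEntropy_nonneg ht.1 ht.2)]
  exact Real.binEntropy_le_log_two

lemma continuousOn_tsum_mul_comp_unitCube {w : ℕ → ℝ} (hw : Summable w) {f : ℝ → ℝ} {C : ℝ}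
    (hf : ContinuousOn f (Icc 0 1)) (hfC : ∀ t ∈ Icc (0 : ℝ) 1, |f t| ≤ C) :
    ContinuousOn (fun s : ℕ → ℝ => ∑' k, w k * f (s k)) unitCube := by
  refine continuousOn_tsum (u := fun k => |w k| * C) (fun k => ?_) (hw.abs.mul_right C) ?_
  · exact continuousOn_const.mul (hf.comp (continuous_apply k).continuousOn fun s hs => hs k)
  · intro k s hs
    rw [Real.norm_eq_abs, abs_mul]
    exact mul_le_mul_of_nonneg_left (hfC _ (hs k)) (abs_nonneg _)

lemma fBeta_pos (β : ℝ) {u : ℝ} (hu : u ∈ Icc (0 : ℝ) (1 / 2)) : 0 < fBeta β u := by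
  obtain ⟨hu0, hu1⟩ := hu
  have hx : 0 ≤ 1 - 2 * u := by linarith
  have hden : 0 < 2 * (1 - u) := by linarith
  have hrad : 0 < 1 + (Real.exp (-4 * β) - 1) * (1 - 2 * u) ^ 2 := by
    have he := Real.exp_pos (-4 * β)
    have hy : (1 - 2 * u) ^ 2 ≤ 1 := by nlinarith
    -- `1 + (e - 1) y` is a convex combination of `1` and `e > 0`
    nlinarith [mul_nonneg he.le (sq_nonneg (1 - 2 * u)), mul_pos he he]
  have := Real.sqrt_pos.mpr hrad
  unfold fBeta
  positivity

lemma continuousOn_log_fBeta (β : ℝ) :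
    ContinuousOn (fun u => Real.log (fBeta β u)) (Icc 0 (1 / 2)) := by
  refine ContinuousOn.log ?_ fun u hu => (fBeta_pos β hu).ne'
  unfold fBeta
  refine ContinuousOn.div (by fun_prop) (by fun_prop) fun u hu => ?_
  linarith [hu.2]

lemma min_self_one_sub_mem_Icc {t : ℝ} (ht : t ∈ Icc (0 : ℝ) 1) :
    min t (1 - t) ∈ Icc (0 : ℝ) (1 / 2) := by
  obtain ⟨h0, h1⟩ := ht
  refine ⟨le_min h0 (by linarith), ?_⟩
  rcases le_total t (1 / 2) with h | h
  · exact (min_le_left _ _).trans h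
  · exact (min_le_right _ _).trans (by linarith)

lemma continuousOn_FBeta (β : ℝ) : ContinuousOn (FBeta β) (Icc 0 1) := by
  have hprim := intervalIntegral.continuousOn_primitive_interval (μ := MeasureTheory.volume)
    (a := (0 : ℝ)) (b := 1 / 2) (f := fun u => Real.log (fBeta β u))
  rw [uIcc_of_le (by norm_num)] at hprim
  exact (hprim (continuousOn_log_fBeta β).integrableOn_Icc).comp (by fun_prop)
    fun t ht => min_self_one_sub_mem_Icc ht

section DegreeDistribution

variable {p : ℕ → ℝ}

lemma summable_of_summable_natCast_mul (hp : ∀ k, 0 ≤ p k)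
    (hmean : Summable fun k : ℕ => (k : ℝ) * p k) : Summable p := by
  rw [← summable_nat_add_iff 1]
  refine Summable.of_nonneg_of_le (fun k => hp _) (fun k => ?_)
    ((summable_nat_add_iff 1).mpr hmean)
  push_cast
  nlinarith [hp (k + 1), (k.cast_nonneg : (0 : ℝ) ≤ k)]

lemma tsum_natCast_mul_mul_div_meanD_mem_Icc (hp : ∀ k, 0 ≤ p k)
    (hmean : Summable fun k : ℕ => (k : ℝ) * p k) {s : ℕ → ℝ} (hs : s ∈ unitCube) :
    (∑' k : ℕ, (k : ℝ) * p k * s k) / meanD p ∈ Icc (0 : ℝ) 1 := by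
  have hw : ∀ k : ℕ, 0 ≤ (k : ℝ) * p k := fun k => mul_nonneg k.cast_nonneg (hp k)
  have hlow : ∀ k : ℕ, 0 ≤ (k : ℝ) * p k * s k := fun k => mul_nonneg (hw k) (hs k).1
  have hup : ∀ k : ℕ, (k : ℝ) * p k * s k ≤ (k : ℝ) * p k :=
    fun k => mul_le_of_le_one_right (hw k) (hs k).2
  have hle : ∑' k : ℕ, (k : ℝ) * p k * s k ≤ meanD p :=
    (Summable.of_nonneg_of_le hlow hup hmean).tsum_le_tsum hup hmean
  exact ⟨div_nonneg (tsum_nonneg hlow) (tsum_nonneg hw), div_le_one_of_le₀ hle (tsum_nonneg hw)⟩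

lemma continuousOn_Gfun (hp : ∀ k, 0 ≤ p k) (hmean : Summable fun k : ℕ => (k : ℝ) * p k)
    (β B : ℝ) : ContinuousOn (Gfun p β B) unitCube := by
  have hsum := summable_of_summable_natCast_mul hp hmean
  have hid : ∀ t ∈ Icc (0 : ℝ) 1, |id t| ≤ 1 := fun t ht => by
    rw [id, abs_of_nonneg ht.1]
    exact ht.2
  have hentI : ContinuousOn entI (Icc 0 1) := by
    rw [entI_eq_binEntropy]
    exact Real.binEntropy_continuous.continuousOn
  have hentropy := continuousOn_tsum_mul_comp_unitCube hsum hentI fun _ => abs_entI_le_log_two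
  have hmass : ContinuousOn (fun s : ℕ → ℝ => ∑' k, s k * p k) unitCube := by
    simpa only [id, mul_comm (p _)] using
      continuousOn_tsum_mul_comp_unitCube hsum continuousOn_id hid
  have hdeg := continuousOn_tsum_mul_comp_unitCube hmean continuousOn_id hid
  exact (hentropy.add (continuousOn_const.mul ((continuousOn_const.mul hmass).sub
    continuousOn_const))).add (continuousOn_const.mul ((continuousOn_FBeta β).comp
      (hdeg.div_const _) fun s hs => tsum_natCast_mul_mul_div_meanD_mem_Icc hp hmean hs))

end DegreeDistribution

theorem Gfun_continuousOn_and_attains_sup_general (p : ℕ → ℝ) (hp : ∀ k, 0 ≤ p k)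
    (hmean : Summable fun k : ℕ => (k:ℝ) * p k)
    (β B : ℝ) :
    ContinuousOn (Gfun p β B) unitCube ∧
    ∃ s ∈ unitCube, Gfun p β B s = sSup (Gfun p β B '' unitCube) := by
  have hcont := continuousOn_Gfun hp hmean β B
  obtain ⟨s, hs, hmax⟩ := isCompact_unitCube.exists_sSup_image_eq unitCube_nonempty hcont
  exact ⟨hcont, s, hs, hmax.symm⟩

/-- `G_{β,B}` is continuous on `[0,1]^ℕ` (with the product topology) and attains
its supremum there. -/
theorem Gfun_continuousOn_and_attains_sup (p : ℕ → ℝ) (hp : ∀ k, 0 ≤ p k) (hp0 : p 0 = 0)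
    (hpsum : (∑' k, p k) = 1) (hmean : Summable fun k : ℕ => (k:ℝ) * p k)
    (β B : ℝ) (hβ : 0 ≤ β) :
    ContinuousOn (Gfun p β B) unitCube ∧
    ∃ s ∈ unitCube, Gfun p β B s = sSup (Gfun p β B '' unitCube) :=
  Gfun_continuousOn_and_attains_sup_general p hp hmean β B
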